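/- arXiv:1102.3882 — 6 statements merged into one kernel-verified Lean document; each statement's English description precedes it below -/
import Mathlib

section
/- Let f : (𝔽₂)⁴ → (𝔽₂)⁴ be a function with f(0)=0 such that (i) f is 4-differentially uniform, and (ii) f is strongly 2-anti-invariant. Then f is weakly APN. -/
/-- The vector space `(𝔽₂)⁴`. -/
abbrev V4 := Fin 4 → ZMod 2

/-- The derivative `f̂_u : x ↦ f(x+u) + f(x)`. -/
def deriv4 (f : V4 → V4) (u x : V4) : V4 := f (x + u) + f x

/-- The 𝔽₂-dot product on `(𝔽₂)⁴`. -/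
def dot4 (v w : V4) : ZMod 2 := ∑ i, v i * w i

/-- `f` is weakly APN: for every `u ≠ 0`, `|Im f̂_u| > 4 = 2^{4-2}`. -/
def WeaklyAPN4 (f : V4 → V4) : Prop :=
  ∀ u : V4, u ≠ 0 → 4 < (Set.range (deriv4 f u)).ncard

/-- `f` is 4-differentially uniform. -/
def DiffUnif4 (f : V4 → V4) : Prop :=
  ∀ u : V4, u ≠ 0 → ∀ v : V4, {x : V4 | deriv4 f u x = v}.ncard ≤ 4

/-- The coefficient of the monomial `∏_{i ∈ S} xᵢ` in the algebraic normal form of `g`. -/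
def anfCoeff (g : V4 → ZMod 2) (S : Finset (Fin 4)) : ZMod 2 :=
  ∑ x ∈ Finset.univ.filter (fun x : V4 => ∀ i, x i = 1 → i ∈ S), g x

/-- The algebraic degree of `g` is at most `d`. -/
def DegLE (g : V4 → ZMod 2) (d : ℕ) : Prop :=
  ∀ S : Finset (Fin 4), d < S.card → anfCoeff g S = 0

/-- The algebraic degree of `g` equals `d`. -/
def DegEq (g : V4 → ZMod 2) (d : ℕ) : Prop := DegLE g d ∧ ¬ DegLE g (d - 1)

/-- The component function `⟨f, v⟩ : x ↦ ⟨f(x), v⟩`. -/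
def comp4 (f : V4 → V4) (v : V4) (x : V4) : ZMod 2 := dot4 (f x) v

/-- `n₃(f)`: the number of nonzero `v` with `deg⟨f,v⟩ = 3`. -/
noncomputable def n3 (f : V4 → V4) : ℕ := {v : V4 | v ≠ 0 ∧ DegEq (comp4 f v) 3}.ncard

/-- The Walsh coefficient `W_f(a,b) = Σ_x (-1)^{⟨f(x),b⟩ + ⟨x,a⟩}`. -/
def walsh (f : V4 → V4) (a b : V4) : ℤ :=
  ∑ x : V4, (-1 : ℤ) ^ (dot4 (f x) b + dot4 x a).val

/-- `Lin(f) = n`: `n` is the maximum of `|W_f(a,b)|` over all `a` and nonzero `b`. -/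
def LinEq (f : V4 → V4) (n : ℤ) : Prop :=
  IsGreatest {t : ℤ | ∃ a b : V4, b ≠ 0 ∧ t = |walsh f a b|} n

/-- `a` has Hamming weight 1. -/
def Wt1 (a : V4) : Prop := {i : Fin 4 | a i ≠ 0}.ncard = 1

/-- `Lin₁(f) = n`: max of `|W_f(a,b)|` over `a, b` of Hamming weight 1. -/
def Lin1Eq (f : V4 → V4) (n : ℤ) : Prop :=
  IsGreatest {t : ℤ | ∃ a b : V4, Wt1 a ∧ Wt1 b ∧ t = |walsh f a b|} n

/-- `Diff₁(f) = n`: max of `|{x : f̂_a(x) = b}|` over `a, b` of Hamming weight 1. -/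
def Diff1Eq (f : V4 → V4) (n : ℕ) : Prop :=
  IsGreatest {t : ℕ | ∃ a b : V4, Wt1 a ∧ Wt1 b ∧ t = {x : V4 | deriv4 f a x = b}.ncard} n

/-- `f` is strongly 2-anti-invariant. -/
def StronglyAntiInv2 (f : V4 → V4) : Prop :=
  ∀ V W : Submodule (ZMod 2) V4, f '' (V : Set V4) = (W : Set V4) →
    (Module.finrank (ZMod 2) V = Module.finrank (ZMod 2) W ∧ Module.finrank (ZMod 2) W < 2)
    ∨ (V = ⊤ ∧ W = ⊤)

/-- Identify `k : ℕ` with a vector of `(𝔽₂)⁴` via binary digits. -/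
def toVec (k : ℕ) : V4 := fun i => (((k / 2 ^ (i : ℕ)) % 2 : ℕ) : ZMod 2)

/-- Identify a vector of `(𝔽₂)⁴` with a natural number via binary digits. -/
def toNat4 (x : V4) : ℕ := ∑ i, (x i).val * 2 ^ (i : ℕ)

/-- The function on `(𝔽₂)⁴` given by a value table of integers. -/
def tableFun (L : List ℕ) (x : V4) : V4 := toVec (L.getD (toNat4 x) 0)

/-! If `f̂_u` took at most four values, then, as its fibres have at most four of the sixteen
points, the fibre through `0` would have four points: besides `0` and `u` it contains some `y`,
and `f̂_u(y) = f̂_u(0)` with `f(0) = 0` reads `f(u + y) = f(u) + f(y)`. Hence `f` maps the plane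
`⟨u, y⟩` onto the subspace `⟨f(u), f(y)⟩`, which strong 2-anti-invariance forbids. -/

open Finset

theorem card_add_le_ncard_fiber_add_ncard_range_mul {α β : Type*} [Finite α] (g : α → β) {k : ℕ}
    (hk : ∀ b, {x | g x = b}.ncard ≤ k) (a : α) :
    Nat.card α + k ≤ {x | g x = g a}.ncard + (Set.range g).ncard * k := by
  classical
  have := Fintype.ofFinite α
  have hfib (b : β) : {x | g x = b}.ncard = #{x | g x = b} := by
    rw [Set.ncard_eq_toFinset_card', Set.toFinset_ofPred]
  have hrange : (Set.range g).ncard = #(univ.image g) := by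
    rw [← Set.ncard_coe_finset, coe_image, coe_univ, Set.image_univ]
  have ha : g a ∈ univ.image g := mem_image_of_mem g (mem_univ a)
  have hrest : ∑ b ∈ (univ.image g).erase (g a), #{x | g x = b}
      ≤ #((univ.image g).erase (g a)) * k :=
    sum_le_card_nsmul _ _ _ fun b _ => hfib b ▸ hk b
  rw [Nat.card_eq_fintype_card, ← card_univ, card_eq_sum_card_image g, ← add_sum_erase _ _ ha,
    hfib, hrange, ← card_erase_add_one ha, add_one_mul]
  omega

theorem ZMod.eq_zero_or_eq_one_of_two (c : ZMod 2) : c = 0 ∨ c = 1 := by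
  decide +revert

section CharTwo

variable {M N : Type*} [AddCommGroup M] [Module (ZMod 2) M] [AddCommGroup N] [Module (ZMod 2) N]

theorem ZModModule.coe_span_pair (a b : M) :
    (Submodule.span (ZMod 2) {a, b} : Set M) = {0, a, b, a + b} := by
  ext z
  simp only [SetLike.mem_coe, Submodule.mem_span_pair]
  constructor
  · rintro ⟨c, d, rfl⟩
    obtain rfl | rfl := ZMod.eq_zero_or_eq_one_of_two c <;>
      obtain rfl | rfl := ZMod.eq_zero_or_eq_one_of_two d <;> simp
  · rintro (rfl | rfl | rfl | rfl)
    exacts [⟨0, 0, by simp⟩, ⟨1, 0, by simp⟩, ⟨0, 1, by simp⟩, ⟨1, 1, by simp⟩]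

theorem ZModModule.finrank_span_pair {u y : M} (hu : u ≠ 0) (hy : y ≠ 0) (hne : u ≠ y) :
    Module.finrank (ZMod 2) (Submodule.span (ZMod 2) {u, y}) = 2 := by
  have hind : LinearIndependent (ZMod 2) ![u, y] := by
    rw [LinearIndependent.pair_iff' hu]
    intro c
    obtain rfl | rfl := ZMod.eq_zero_or_eq_one_of_two c
    exacts [by simpa using hy.symm, by simpa using hne]
  rw [← Matrix.range_cons_cons_empty, finrank_span_eq_card hind, Fintype.card_fin]

theorem image_span_pair_of_add_eq (f : M → N) (hf0 : f 0 = 0) {u y : M}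
    (h : f (y + u) + f y = f u) :
    f '' (Submodule.span (ZMod 2) {u, y} : Set M) = Submodule.span (ZMod 2) {f u, f y} := by
  have hyu : f (u + y) = f u + f y := by
    rw [← h, add_assoc, ZModModule.add_self, add_zero, add_comm]
  simp only [ZModModule.coe_span_pair, Set.image_insert_eq, Set.image_singleton, hf0, hyu]

end CharTwo

/-- Proposition 1 (invariant): if `f : (𝔽₂)⁴ → (𝔽₂)⁴` with `f 0 = 0` is
4-differentially uniform and strongly 2-anti-invariant, then `f` is weakly APN. -/
theorem weaklyAPN_of_diffUnif_of_stronglyAntiInv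
    (f : V4 → V4) (hf0 : f 0 = 0)
    (h1 : DiffUnif4 f) (h2 : StronglyAntiInv2 f) :
    WeaklyAPN4 f := by
  intro u hu
  by_contra! hrange
  have hfiber : 4 ≤ {x | deriv4 f u x = deriv4 f u 0}.ncard := by
    have := card_add_le_ncard_fiber_add_ncard_range_mul (deriv4 f u) (h1 u hu) 0
    rw [Nat.card_eq_fintype_card, Fintype.card_fun, ZMod.card, Fintype.card_fin] at this
    linarith
  obtain ⟨y, hy, hy0u⟩ := Set.exists_mem_notMem_of_ncard_lt_ncard (s := {0, u})
    (show _ < {x | deriv4 f u x = deriv4 f u 0}.ncard by rw [Set.ncard_pair hu.symm]; omega)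
  obtain ⟨hy0, hyu⟩ : y ≠ 0 ∧ y ≠ u := by simpa using hy0u
  have hrank := ZModModule.finrank_span_pair hu hy0 hyu.symm
  have himage := image_span_pair_of_add_eq f hf0 (by simpa [deriv4, hf0] using hy)
  rcases h2 _ _ himage with ⟨hVW, hW⟩ | ⟨hV, -⟩
  · omega
  · rw [hV, finrank_top, Module.finrank_fin_fun] at hrank
    omega
end

section
/- Let f : (𝔽₂)⁴ → (𝔽₂)⁴ be a function with f(0)=0 such that for every u ≠ 0 and every v ≠ 0 the Boolean function x ↦ ⟨f̂_u(x), v⟩ is not constant (i.e. n̂(f) = 0). Then f is weakly APN. -/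
/-!
If the image of `f̂_u` had at most `4` points, the differences of its points with a fixed one
would be at most `3` vectors of `(𝔽₂)⁴`, which have a nonzero common orthogonal `v`; the
component `⟨f̂_u, v⟩` would then be constant.
-/

open Matrix

theorem Matrix.exists_ne_zero_mulVec_eq_zero_of_card_lt {m n K : Type*} [Field K] [Fintype m]
    [Fintype n] (M : Matrix m n K) (h : Fintype.card m < Fintype.card n) :
    ∃ v ≠ 0, M *ᵥ v = 0 := by
  obtain ⟨v, hv, hne⟩ := Submodule.exists_mem_ne_zero_of_ne_bot
    (LinearMap.ker_ne_bot_of_finrank_lt (f := M.mulVecLin) (by simpa using h))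
  exact ⟨v, hne, hv⟩

theorem exists_ne_zero_dotProduct_const_of_ncard_le {ι K : Type*} [Field K] [Fintype ι]
    {S : Set (ι → K)} (hfin : S.Finite) (hne : S.Nonempty)
    (hcard : S.ncard ≤ Fintype.card ι) :
    ∃ v ≠ 0, ∃ c, ∀ s ∈ S, s ⬝ᵥ v = c := by
  classical
  obtain ⟨s₀, hs₀⟩ := hne
  let T := hfin.toFinset.erase s₀
  have hT : Fintype.card T < Fintype.card ι := by
    rw [Fintype.card_coe, Finset.card_erase_of_mem (hfin.mem_toFinset.mpr hs₀),
      ← Set.ncard_eq_toFinset_card S hfin]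
    have := (Set.ncard_pos hfin).mpr ⟨s₀, hs₀⟩
    omega
  obtain ⟨v, hv, hker⟩ :=
    Matrix.exists_ne_zero_mulVec_eq_zero_of_card_lt (fun t : T => (t : ι → K) - s₀) hT
  refine ⟨v, hv, s₀ ⬝ᵥ v, fun s hs => ?_⟩
  by_cases hss₀ : s = s₀
  · rw [hss₀]
  · have hsT : s ∈ T := Finset.mem_erase.mpr ⟨hss₀, hfin.mem_toFinset.mpr hs⟩
    have horth : (s - s₀) ⬝ᵥ v = 0 := congrFun hker ⟨s, hsT⟩
    rwa [sub_dotProduct, sub_eq_zero] at horth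

theorem weaklyAPN_of_no_constant_derivative_component_general
    (f : V4 → V4)
    (h : ∀ u : V4, u ≠ 0 → ∀ v : V4, v ≠ 0 →
      ¬ ∃ c : ZMod 2, ∀ x : V4, dot4 (deriv4 f u x) v = c) :
    WeaklyAPN4 f := by
  intro u hu
  by_contra! hcard
  obtain ⟨v, hv, c, hc⟩ := exists_ne_zero_dotProduct_const_of_ncard_le (Set.toFinite _)
    (Set.range_nonempty (deriv4 f u)) (by rwa [Fintype.card_fin])
  exact h u hu v hv ⟨c, fun x => hc _ (Set.mem_range_self x)⟩

/-- Proposition 2 (derivative): if `f : (𝔽₂)⁴ → (𝔽₂)⁴` with `f 0 = 0` is such that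
no nonzero component of any derivative `f̂_u` (`u ≠ 0`) is constant (i.e. `n̂(f) = 0`),
then `f` is weakly APN. -/
theorem weaklyAPN_of_no_constant_derivative_component
    (f : V4 → V4) (hf0 : f 0 = 0)
    (h : ∀ u : V4, u ≠ 0 → ∀ v : V4, v ≠ 0 →
      ¬ ∃ c : ZMod 2, ∀ x : V4, dot4 (deriv4 f u x) v = c) :
    WeaklyAPN4 f :=
  weaklyAPN_of_no_constant_derivative_component_general f h
end

section
/- Let m ≥ 2 and let f : (𝔽₂)^m → (𝔽₂)^m be a weakly APN function. Then for every u ≠ 0 there is at most one nonzero v ∈ (𝔽₂)^m such that the Boolean function x ↦ ⟨f̂_u(x), v⟩ is constant; in other words n̂(f) ≤ 1. -/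
/-!
If `v₁ ≠ v₂` are two nonzero vectors for which `x ↦ ⟨f̂_u(x), vᵢ⟩` is constant, they are linearly
independent over `𝔽₂`, so the image of `f̂_u` lies in a fiber of the surjective linear map
`y ↦ (⟨y, v₁⟩, ⟨y, v₂⟩)` onto `𝔽₂²`, i.e. in an affine subspace with `2^m / 4` elements,
contradicting weak APN-ness.
-/

open Matrix

theorem AddMonoidHom.ncard_preimage_singleton_mul_card {G H : Type*} [AddGroup G] [AddGroup H]
    [Finite G] (φ : G →+ H) (hφ : Function.Surjective φ) (h : H) :
    (φ ⁻¹' {h}).ncard * Nat.card H = Nat.card G := by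
  obtain ⟨g, rfl⟩ := hφ h
  have hfiber : φ ⁻¹' {φ g} = (· + g) '' (φ.ker : Set G) := by
    ext x
    simp [Set.image_add_right, add_neg_eq_zero]
  rw [hfiber, Set.ncard_image_of_injective _ (add_left_injective g), ← Nat.card_coe_set_eq,
    SetLike.coe_sort_coe, ← AddSubgroup.card_top (G := H), ← AddMonoidHom.range_eq_top.mpr hφ,
    ← AddSubgroup.index_ker, AddSubgroup.card_mul_index]

theorem Matrix.mulVec_surjective_of_linearIndependent_row {K m n : Type*} [Field K] [Fintype m]
    [Fintype n] {M : Matrix m n K} (hM : LinearIndependent K M.row) :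
    Function.Surjective M.mulVec := by
  rw [← M.coe_mulVecLin, ← LinearMap.range_eq_top]
  apply Submodule.eq_top_of_finrank_eq
  rw [← Matrix.rank, hM.rank_matrix, Module.finrank_fintype_fun_eq_card]

theorem LinearIndependent.pair_of_ne_zero_of_ne {V : Type*} [AddCommGroup V] [Module (ZMod 2) V]
    {v w : V} (hv : v ≠ 0) (hw : w ≠ 0) (hvw : v ≠ w) : LinearIndependent (ZMod 2) ![v, w] := by
  rw [LinearIndependent.pair_iff' hv]
  intro a
  fin_cases a
  · exact fun h => hw (h.symm.trans (zero_smul _ v))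
  · exact fun h => hvw ((one_smul _ v).symm.trans h)

theorem ncard_mul_card_pow_le_of_dotProduct_eq {K ι n : Type*} [Field K] [Finite K] [Finite ι]
    [Fintype n] {v : ι → n → K} (hv : LinearIndependent K v) {S : Set (n → K)} {c : ι → K}
    (hS : ∀ y ∈ S, ∀ i, v i ⬝ᵥ y = c i) :
    S.ncard * Nat.card K ^ Nat.card ι ≤ Nat.card K ^ Nat.card n := by
  have := Fintype.ofFinite ι
  have hsurj := mulVec_surjective_of_linearIndependent_row (M := Matrix.of v) hv
  have hS_sub : S ⊆ (Matrix.of v).mulVec ⁻¹' {c} := fun y hy => funext (hS y hy)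
  have hfiber := AddMonoidHom.ncard_preimage_singleton_mul_card
    (Matrix.of v).mulVecLin.toAddMonoidHom hsurj c
  simp only [Nat.card_fun] at hfiber
  rw [← hfiber]
  exact Nat.mul_le_mul_right _ (Set.ncard_le_ncard hS_sub)

theorem nhat_le_one_of_weaklyAPN_general {m : ℕ}
    (f : (Fin m → ZMod 2) → (Fin m → ZMod 2))
    (hAPN : ∀ u : Fin m → ZMod 2, u ≠ 0 →
      2 ^ (m - 2) < (Set.range (fun x : Fin m → ZMod 2 => f (x + u) + f x)).ncard) :
    ∀ u : Fin m → ZMod 2, u ≠ 0 →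
      {v : Fin m → ZMod 2 | v ≠ 0 ∧
        ∃ c : ZMod 2, ∀ x : Fin m → ZMod 2, ∑ i, (f (x + u) + f x) i * v i = c}.Subsingleton := by
  rintro u hu v₁ ⟨hv₁, c₁, hc₁⟩ v₂ ⟨hv₂, c₂, hc₂⟩
  by_contra hne
  have hrange := ncard_mul_card_pow_le_of_dotProduct_eq
    (LinearIndependent.pair_of_ne_zero_of_ne hv₁ hv₂ hne)
    (S := Set.range fun x => f (x + u) + f x) (c := ![c₁, c₂]) <| by
      rintro _ ⟨x, rfl⟩ i
      fin_cases i
      · exact (dotProduct_comm _ _).trans (hc₁ x)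
      · exact (dotProduct_comm _ _).trans (hc₂ x)
  simp only [Nat.card_zmod, Nat.card_fin] at hrange
  have : 2 ^ m < 2 ^ m := calc
    2 ^ m ≤ 2 ^ (m - 2) * 2 ^ 2 := by
      rw [← pow_add]; exact Nat.pow_le_pow_right two_pos (by omega)
    _ < _ * 2 ^ 2 := Nat.mul_lt_mul_of_pos_right (hAPN u hu) (by norm_num)
    _ ≤ 2 ^ m := hrange
  exact lt_irrefl _ this

/-- Theorem (converse): if `m ≥ 2` and `f : (𝔽₂)^m → (𝔽₂)^m` is weakly APN
(for every `u ≠ 0` the image of the derivative `f̂_u : x ↦ f(x+u) + f(x)` has more than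
`2^{m-2}` elements), then for every `u ≠ 0` there is at most one nonzero `v` such that the
component function `x ↦ ⟨f̂_u(x), v⟩` is constant; i.e. `n̂(f) ≤ 1`. -/
theorem nhat_le_one_of_weaklyAPN {m : ℕ} (hm : 2 ≤ m)
    (f : (Fin m → ZMod 2) → (Fin m → ZMod 2))
    (hAPN : ∀ u : Fin m → ZMod 2, u ≠ 0 →
      2 ^ (m - 2) < (Set.range (fun x : Fin m → ZMod 2 => f (x + u) + f x)).ncard) :
    ∀ u : Fin m → ZMod 2, u ≠ 0 →
      {v : Fin m → ZMod 2 | v ≠ 0 ∧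
        ∃ c : ZMod 2, ∀ x : Fin m → ZMod 2, ∑ i, (f (x + u) + f x) i * v i = c}.Subsingleton :=
  nhat_le_one_of_weaklyAPN_general f hAPN
end

section
/- Let f : (𝔽₂)⁴ → (𝔽₂)⁴ be a weakly APN permutation with f(0)=0. Then the algebraic degree of f equals 3 and n₃(f) ∈ {14, 15}, where n₃(f) is the number of nonzero v ∈ (𝔽₂)⁴ with deg⟨f,v⟩ = 3. -/
open Module Submodule

namespace LinearMap.BilinForm

section

variable {R M : Type*} [CommRing R] [AddCommGroup M] [Module R M]

theorem ker_add_le_inf_of_sup_eq_top {B₁ B₂ : LinearMap.BilinForm R M} (h₁ : B₁.IsRefl)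
    (h₂ : B₂.IsRefl) (hsup : LinearMap.ker B₁ ⊔ LinearMap.ker B₂ = ⊤) :
    LinearMap.ker (B₁ + B₂) ≤ LinearMap.ker B₁ ⊓ LinearMap.ker B₂ := by
  intro u hu
  have hu' : ∀ x, B₁ u x + B₂ u x = 0 := fun x => by simpa using LinearMap.congr_fun hu x
  have hvanish : ∀ x, B₁ u x = 0 ∧ B₂ u x = 0 := by
    intro x
    obtain ⟨p, hp, q, hq, rfl⟩ := mem_sup.1 (hsup ▸ mem_top : x ∈ LinearMap.ker B₁ ⊔ _)
    have hp₁ : B₁ u p = 0 := h₁ p u (by simp [LinearMap.mem_ker.1 hp])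
    have hq₂ : B₂ u q = 0 := h₂ q u (by simp [LinearMap.mem_ker.1 hq])
    have hp₂ : B₂ u p = 0 := by simpa [hp₁] using hu' p
    have hq₁ : B₁ u q = 0 := by simpa [hq₂] using hu' q
    simp [hp₁, hp₂, hq₁, hq₂]
  exact ⟨LinearMap.ext fun x => (hvanish x).1, LinearMap.ext fun x => (hvanish x).2⟩

end

variable {K V : Type*} [Field K] [AddCommGroup V] [Module K V]

theorem linearIndependent_of_isAlt {B : LinearMap.BilinForm K V} (hB : B.IsAlt) {a b k m : V}
    (hab : B a b ≠ 0) (hk : ∀ x, B x k = 0) (hk0 : k ≠ 0) (hma : B a m = 0) (hmb : B b m = 0)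
    (hmk : m ∉ K ∙ k) : LinearIndependent K ![a, b, k, m] := by
  rw [Fintype.linearIndependent_iff]
  intro c hc
  simp only [Fin.sum_univ_four, Matrix.cons_val] at hc
  have hc1 : c 1 = 0 := by
    have := congrArg (B a) hc
    simp only [map_add, map_smul, hB.self_eq_zero, hk, hma, smul_eq_mul, map_zero] at this
    simpa [hab] using this
  have hc0 : c 0 = 0 := by
    have := congrArg (B b) hc
    simp only [map_add, map_smul, hB.self_eq_zero, hk, hmb, smul_eq_mul, map_zero] at this
    simpa [← LinearMap.IsAlt.neg hB a b, hab] using this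
  have hc3 : c 3 = 0 := by
    by_contra h3
    refine hmk ((Submodule.smul_mem_iff _ h3).1 ?_)
    rw [eq_neg_of_add_eq_zero_right (a := c 2 • k) (b := c 3 • m) (by simpa [hc0, hc1] using hc)]
    exact neg_mem (smul_mem _ _ (mem_span_singleton_self k))
  have hc2 : c 2 = 0 := by
    simpa [hc0, hc1, hc3, hk0] using hc
  intro i
  fin_cases i <;> assumption

variable [FiniteDimensional K V]

theorem exists_apply_eq_zero_notMem_span_singleton (hV : 4 ≤ finrank K V)
    (φ ψ : Module.Dual K V) (k : V) : ∃ m, φ m = 0 ∧ ψ m = 0 ∧ m ∉ K ∙ k := by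
  by_contra! h
  have hle : LinearMap.ker (φ.prod ψ) ≤ K ∙ k := fun m hm => by
    simp only [LinearMap.mem_ker, LinearMap.prod_apply, Function.prod, Prod.mk_eq_zero] at hm
    exact h m hm.1 hm.2
  have hspan : finrank K (K ∙ k) ≤ 1 := by simpa using finrank_span_le_card ({k} : Set V)
  have hker := Submodule.finrank_mono hle
  have hrank := (φ.prod ψ).finrank_range_add_finrank_ker
  have hrange := Submodule.finrank_le (LinearMap.range (φ.prod ψ))
  simp only [finrank_prod, finrank_self] at hrange
  omega

theorem two_le_finrank_ker_of_isAlt (hV : finrank K V = 4) {B : LinearMap.BilinForm K V}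
    (hB : B.IsAlt) (hB0 : B ≠ 0) (hker : LinearMap.ker B ≠ ⊥) :
    2 ≤ finrank K (LinearMap.ker B) := by
  obtain ⟨k, hk, hk0⟩ := Submodule.exists_mem_ne_zero_of_ne_bot hker
  obtain ⟨a, b, hab⟩ : ∃ a b, B a b ≠ 0 := by
    by_contra! h
    exact hB0 (LinearMap.ext₂ h)
  have hBk : ∀ x, B x k = 0 := fun x => hB.isRefl k x (by simp [LinearMap.mem_ker.1 hk])
  obtain ⟨m, hma, hmb, hmk⟩ :=
    exists_apply_eq_zero_notMem_span_singleton (by omega) (B a) (B b) k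
  -- `B m` vanishes on the basis `a, b, k, m`.
  have hli := linearIndependent_of_isAlt hB hab hBk hk0 hma hmb hmk
  have hm : m ∈ LinearMap.ker B := by
    rw [LinearMap.mem_ker]
    refine LinearMap.ext_on_range (hli.span_eq_top_of_card_eq_finrank' (by simp [hV])) fun i => ?_
    fin_cases i
    · simpa using hB.isRefl a m hma
    · simpa using hB.isRefl b m hmb
    · simpa using hBk m
    · simpa using hB.self_eq_zero m
  have hlt : K ∙ k < LinearMap.ker B :=
    SetLike.lt_iff_le_and_exists.2 ⟨(span_singleton_le_iff_mem k _).2 hk, m, hm, hmk⟩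
  have := Submodule.finrank_lt_finrank_of_lt hlt
  rwa [finrank_span_singleton hk0] at this

theorem ker_inf_ker_ne_bot_of_isAlt (hV : finrank K V = 4) {B₁ B₂ : LinearMap.BilinForm K V}
    (h₁ : B₁.IsAlt) (h₂ : B₂.IsAlt) (hker₁ : LinearMap.ker B₁ ≠ ⊥)
    (hker₂ : LinearMap.ker B₂ ≠ ⊥) (hker₁₂ : LinearMap.ker (B₁ + B₂) ≠ ⊥) :
    LinearMap.ker B₁ ⊓ LinearMap.ker B₂ ≠ ⊥ := by
  intro hinf
  rcases eq_or_ne B₁ 0 with rfl | hB₁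
  · simp_all
  rcases eq_or_ne B₂ 0 with rfl | hB₂
  · simp_all
  have hsup : LinearMap.ker B₁ ⊔ LinearMap.ker B₂ = ⊤ := by
    apply eq_top_of_finrank_eq
    have := finrank_sup_add_finrank_inf_eq (LinearMap.ker B₁) (LinearMap.ker B₂)
    rw [hinf, finrank_bot] at this
    have := two_le_finrank_ker_of_isAlt hV h₁ hB₁ hker₁
    have := two_le_finrank_ker_of_isAlt hV h₂ hB₂ hker₂
    have := Submodule.finrank_le (LinearMap.ker B₁ ⊔ LinearMap.ker B₂)
    omega
  exact hker₁₂ (eq_bot_iff.2 (hinf ▸ ker_add_le_inf_of_sup_eq_top h₁.isRefl h₂.isRefl hsup))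

end LinearMap.BilinForm

section Sign

theorem neg_one_pow_val_add (a b : ZMod 2) :
    (-1 : ℤ) ^ (a + b).val = (-1) ^ a.val * (-1) ^ b.val := by
  fin_cases a <;> fin_cases b <;> rfl

variable {G : Type*} [AddCommGroup G] [Fintype G]

theorem sum_neg_one_pow_val_add_eq_zero (ψ : G →+ ZMod 2) {x₀ : G} (hx₀ : ψ x₀ ≠ 0)
    (c : ZMod 2) : ∑ x, (-1 : ℤ) ^ (ψ x + c).val = 0 := by
  have hψx₀ : ψ x₀ = 1 := Fin.eq_one_of_ne_zero _ hx₀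
  -- translating by `x₀` flips the sign of every term
  have hshift := Equiv.sum_comp (Equiv.addRight x₀) fun x => (-1 : ℤ) ^ (ψ x + c).val
  simp only [Equiv.coe_addRight, map_add, hψx₀, add_right_comm _ (1 : ZMod 2),
    neg_one_pow_val_add _ 1, show (-1 : ℤ) ^ (1 : ZMod 2).val = -1 from rfl, mul_neg_one,
    Finset.sum_neg_distrib] at hshift
  linarith

end Sign

/-- The second derivative `D_x D_u g (0)`. -/
def polar {G : Type*} [AddCommGroup G] (g : G → ZMod 2) (u x : G) : ZMod 2 :=
  g (x + u) + g x + g u + g 0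

/-- `g` takes the values `0` and `1` equally often. -/
def IsBalanced {G : Type*} [Fintype G] (g : G → ZMod 2) : Prop :=
  ∑ x, (-1 : ℤ) ^ (g x).val = 0

section Polar

variable {G : Type*} [AddCommGroup G]

theorem polar_comm (g : G → ZMod 2) (u x : G) : polar g u x = polar g x u := by
  simp only [polar, add_comm x u]
  ring

theorem polar_zero_left (g : G → ZMod 2) (x : G) : polar g 0 x = 0 := by
  simp [polar, CharTwo.add_self_eq_zero]

theorem polar_add (g h : G → ZMod 2) (u x : G) :
    polar (g + h) u x = polar g u x + polar h u x := by
  simp only [polar, Pi.add_apply]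
  ring

theorem add_apply_add_eq_polar (g : G → ZMod 2) (u x : G) :
    g (x + u) + g x = polar g u x + (g u + g 0) := by
  simp only [polar]
  linear_combination -(g u + g 0) * CharTwo.two_eq_zero (R := ZMod 2)

/-- Otherwise the autocorrelation `∑ u, ∑ x, (-1) ^ (g (x + u) + g x)`, which is the square of
`∑ x, (-1) ^ g x = 0`, would reduce to its term `u = 0`, namely `card G`. -/
theorem exists_ne_zero_polar_eq_zero [Fintype G] {g : G → ZMod 2} (hbal : IsBalanced g)
    (hadd : ∀ u x y, polar g u (x + y) = polar g u x + polar g u y) :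
    ∃ u ≠ 0, ∀ x, polar g u x = 0 := by
  by_contra! h
  have hshift : ∀ x, ∑ u, (-1 : ℤ) ^ (g (x + u)).val = ∑ y, (-1 : ℤ) ^ (g y).val :=
    fun x => Equiv.sum_comp (Equiv.addLeft x) fun y => (-1 : ℤ) ^ (g y).val
  have hsq : ∑ u, ∑ x, (-1 : ℤ) ^ (g (x + u) + g x).val = (∑ x, (-1 : ℤ) ^ (g x).val) ^ 2 := by
    calc ∑ u, ∑ x, (-1 : ℤ) ^ (g (x + u) + g x).val
        = ∑ x, (-1 : ℤ) ^ (g x).val * ∑ u, (-1 : ℤ) ^ (g (x + u)).val := by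
          simp only [neg_one_pow_val_add, Finset.mul_sum]
          rw [Finset.sum_comm]
          simp only [mul_comm]
      _ = (∑ x, (-1 : ℤ) ^ (g x).val) ^ 2 := by
          simp only [hshift, ← Finset.sum_mul, sq]
  have hoff : ∀ u ≠ 0, ∑ x, (-1 : ℤ) ^ (g (x + u) + g x).val = 0 := by
    intro u hu
    obtain ⟨x₀, hx₀⟩ := h u hu
    simp only [add_apply_add_eq_polar g u]
    exact sum_neg_one_pow_val_add_eq_zero (AddMonoidHom.mk' (polar g u) (hadd u)) hx₀ _
  rw [Finset.sum_eq_single 0 (fun u _ hu => hoff u hu) (by simp),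
    show ∑ x, (-1 : ℤ) ^ (g x).val = 0 from hbal] at hsq
  simp [CharTwo.add_self_eq_zero] at hsq

end Polar

def mono (S : Finset (Fin 4)) (x : V4) : ZMod 2 := ∏ i ∈ S, x i

/-- Möbius inversion on the subsets of `Fin 4`: the number of `S` with
`supp z ⊆ S ⊆ supp x` is odd exactly when `z = x`. -/
theorem sum_mono_eq_ite : ∀ z x : V4,
    (∑ S : Finset (Fin 4), if ∀ i, z i = 1 → i ∈ S then mono S x else 0) =
      if z = x then 1 else 0 := by
  decide

theorem eq_sum_anfCoeff_mul_mono (g : V4 → ZMod 2) (x : V4) :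
    g x = ∑ S, anfCoeff g S * mono S x := by
  have hz : ∀ z, ∑ S : Finset (Fin 4), (if ∀ i, z i = 1 → i ∈ S then g z else 0) * mono S x =
      g z * if z = x then 1 else 0 := by
    intro z
    rw [← sum_mono_eq_ite z x, Finset.mul_sum]
    exact Finset.sum_congr rfl fun S _ => by split_ifs <;> simp
  simp only [anfCoeff, Finset.sum_mul, Finset.sum_filter]
  rw [Finset.sum_comm]
  simp only [hz, mul_ite, mul_one, mul_zero, Finset.sum_ite_eq', Finset.mem_univ, if_true]

theorem DegLE.add {g h : V4 → ZMod 2} {d : ℕ} (hg : DegLE g d) (hh : DegLE h d) :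
    DegLE (g + h) d := fun S hS => by
  rw [anfCoeff, Pi.add_def, Finset.sum_add_distrib, ← anfCoeff, ← anfCoeff, hg S hS, hh S hS,
    add_zero]

theorem degLE_three_of_sum_eq_zero {g : V4 → ZMod 2} (hg : ∑ x, g x = 0) : DegLE g 3 := by
  intro S hS
  obtain rfl : S = Finset.univ :=
    Finset.eq_univ_of_card S (le_antisymm (Finset.card_le_univ S)
      (by rw [Fintype.card_fin]; omega))
  simpa [anfCoeff] using hg

theorem polar_eq_sum_anfCoeff_mul (g : V4 → ZMod 2) (u x : V4) :
    polar g u x = ∑ S, anfCoeff g S * polar (mono S) u x := by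
  simp only [polar, mul_add, Finset.sum_add_distrib, ← eq_sum_anfCoeff_mul_mono]

theorem polar_mono_add_right {S : Finset (Fin 4)} (hS : S.card ≤ 2) (u x y : V4) :
    polar (mono S) u (x + y) = polar (mono S) u x + polar (mono S) u y := by
  obtain h | h | h : S.card = 0 ∨ S.card = 1 ∨ S.card = 2 := by omega
  · obtain rfl := Finset.card_eq_zero.1 h
    simp [polar, mono, CharTwo.add_self_eq_zero]
  · obtain ⟨i, rfl⟩ := Finset.card_eq_one.1 h
    simp only [polar, mono, Finset.prod_singleton, Pi.add_apply, Pi.zero_apply]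
    ring_nf
    reduce_mod_char
  · obtain ⟨i, j, hij, rfl⟩ := Finset.card_eq_two.1 h
    simp only [polar, mono, Finset.prod_pair hij, Pi.add_apply, Pi.zero_apply]
    ring_nf
    reduce_mod_char

theorem polar_add_right {g : V4 → ZMod 2} (hg : DegLE g 2) (u x y : V4) :
    polar g u (x + y) = polar g u x + polar g u y := by
  simp only [polar_eq_sum_anfCoeff_mul g, ← Finset.sum_add_distrib, ← mul_add]
  refine Finset.sum_congr rfl fun S _ => ?_
  by_cases hS : 2 < S.card
  · simp [hg S hS]
  · rw [polar_mono_add_right (not_lt.1 hS)]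

def polarForm (g : V4 → ZMod 2) (hg : DegLE g 2) : LinearMap.BilinForm (ZMod 2) V4 :=
  LinearMap.mk₂ (ZMod 2) (polar g)
    (fun u v x => by rw [polar_comm, polar_add_right hg, polar_comm g x, polar_comm g x])
    (fun c u x => by
      obtain rfl | rfl : c = 0 ∨ c = 1 := (by revert c; decide) <;> simp [polar_zero_left])
    (fun u x y => polar_add_right hg u x y)
    (fun c u x => by
      obtain rfl | rfl : c = 0 ∨ c = 1 := (by revert c; decide) <;>
        simp [polar_comm g u 0, polar_zero_left])

section PolarForm

variable {g h : V4 → ZMod 2} (hg : DegLE g 2) (hh : DegLE h 2)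

@[simp]
theorem polarForm_apply (u x : V4) : polarForm g hg u x = polar g u x := rfl

theorem isAlt_polarForm : (polarForm g hg).IsAlt := fun u => by
  simp only [polarForm_apply, polar, CharTwo.add_self_eq_zero]
  linear_combination (g 0 + g u) * CharTwo.two_eq_zero (R := ZMod 2)

theorem mem_ker_polarForm {u : V4} :
    u ∈ LinearMap.ker (polarForm g hg) ↔ ∀ x, polar g u x = 0 := by
  simp [LinearMap.ext_iff]

theorem polarForm_add : polarForm (g + h) (hg.add hh) = polarForm g hg + polarForm h hh :=
  LinearMap.ext₂ fun u x => polar_add g h u x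

theorem ker_polarForm_ne_bot (hbal : IsBalanced g) : LinearMap.ker (polarForm g hg) ≠ ⊥ := by
  obtain ⟨u, hu, hpolar⟩ := exists_ne_zero_polar_eq_zero hbal (polar_add_right hg)
  exact (Submodule.ne_bot_iff _).2 ⟨u, (mem_ker_polarForm hg).2 hpolar, hu⟩

end PolarForm

theorem exists_ne_zero_polar_eq_zero_and_polar_eq_zero {g₁ g₂ : V4 → ZMod 2}
    (h₁ : DegLE g₁ 2) (h₂ : DegLE g₂ 2) (hbal₁ : IsBalanced g₁) (hbal₂ : IsBalanced g₂)
    (hbal₁₂ : IsBalanced (g₁ + g₂)) :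
    ∃ u ≠ 0, ∀ x, polar g₁ u x = 0 ∧ polar g₂ u x = 0 := by
  have hker := LinearMap.BilinForm.ker_inf_ker_ne_bot_of_isAlt (Module.finrank_fin_fun _)
    (isAlt_polarForm h₁) (isAlt_polarForm h₂) (ker_polarForm_ne_bot h₁ hbal₁)
    (ker_polarForm_ne_bot h₂ hbal₂)
    (polarForm_add h₁ h₂ ▸ ker_polarForm_ne_bot (h₁.add h₂) hbal₁₂)
  obtain ⟨u, ⟨hu₁, hu₂⟩, hu⟩ := (Submodule.ne_bot_iff _).1 hker
  exact ⟨u, hu, fun x => ⟨(mem_ker_polarForm h₁).1 hu₁ x, (mem_ker_polarForm h₂).1 hu₂ x⟩⟩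

theorem dot4_add_left (x y v : V4) : dot4 (x + y) v = dot4 x v + dot4 y v :=
  add_dotProduct x y v

theorem dot4_add_right (x v w : V4) : dot4 x (v + w) = dot4 x v + dot4 x w :=
  dotProduct_add x v w

def dot4LeftHom (v : V4) : V4 →+ ZMod 2 :=
  AddMonoidHom.mk' (dot4 · v) fun x y => dot4_add_left x y v

theorem sum_dot4_eq_zero (v : V4) : ∑ y, dot4 y v = 0 := by
  have hsum : ∑ y : V4, y = 0 := by decide
  simpa [dot4LeftHom, hsum, dot4] using (map_sum (dot4LeftHom v) id Finset.univ).symm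

theorem isBalanced_dot4 {v : V4} (hv : v ≠ 0) : IsBalanced (dot4 · v) := by
  obtain ⟨i, hi⟩ := Function.ne_iff.1 hv
  have hsingle : dot4LeftHom v (Pi.single i 1) ≠ 0 := by
    simpa [dot4LeftHom, dot4, Pi.single_apply] using hi
  simpa [IsBalanced, dot4LeftHom] using sum_neg_one_pow_val_add_eq_zero _ hsingle 0

set_option maxRecDepth 100000 in
theorem card_filter_dot4_le_four : ∀ v₁ v₂ : V4, ∀ c₁ c₂ : ZMod 2, v₁ ≠ 0 → v₂ ≠ 0 → v₁ ≠ v₂ →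
    (Finset.univ.filter fun y => dot4 y v₁ = c₁ ∧ dot4 y v₂ = c₂).card ≤ 4 := by
  decide

theorem comp4_add (f : V4 → V4) (v w : V4) : comp4 f (v + w) = comp4 f v + comp4 f w :=
  funext fun x => dot4_add_right (f x) v w

section Permutation

variable {f : V4 → V4}

theorem degLE_three_comp4 (hf : Function.Bijective f) (v : V4) : DegLE (comp4 f v) 3 :=
  degLE_three_of_sum_eq_zero ((hf.sum_comp (dot4 · v)).trans (sum_dot4_eq_zero v))

theorem isBalanced_comp4 (hf : Function.Bijective f) {v : V4} (hv : v ≠ 0) :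
    IsBalanced (comp4 f v) :=
  (hf.sum_comp fun y => (-1 : ℤ) ^ (dot4 y v).val).trans (isBalanced_dot4 hv)

/-- `⟨f̂_u, vᵢ⟩` is constant, so `f̂_u` lands in a coset of a subspace of codimension `2`. -/
theorem ncard_range_deriv4_le_four {v₁ v₂ u : V4} (hv₁ : v₁ ≠ 0) (hv₂ : v₂ ≠ 0) (hv : v₁ ≠ v₂)
    (hu : ∀ x, polar (comp4 f v₁) u x = 0 ∧ polar (comp4 f v₂) u x = 0) :
    (Set.range (deriv4 f u)).ncard ≤ 4 := by
  have hconst : ∀ v, (∀ x, polar (comp4 f v) u x = 0) →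
      ∀ x, dot4 (deriv4 f u x) v = comp4 f v u + comp4 f v 0 := fun v hv x => by
    rw [deriv4, dot4_add_left]
    exact (add_apply_add_eq_polar (comp4 f v) u x).trans (by rw [hv x, zero_add])
  have hsub : Set.range (deriv4 f u) ⊆ ↑(Finset.univ.filter fun y =>
      dot4 y v₁ = comp4 f v₁ u + comp4 f v₁ 0 ∧ dot4 y v₂ = comp4 f v₂ u + comp4 f v₂ 0) := by
    rintro _ ⟨x, rfl⟩
    simp only [Finset.coe_filter, Finset.mem_univ, true_and, Set.mem_ofPred_eq]
    exact ⟨hconst v₁ (fun x => (hu x).1) x, hconst v₂ (fun x => (hu x).2) x⟩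
  refine (Set.ncard_le_ncard hsub).trans ?_
  rw [Set.ncard_coe_finset]
  exact card_filter_dot4_le_four _ _ _ _ hv₁ hv₂ hv

theorem not_degLE_two_comp4_of_degLE_two (hf : Function.Bijective f) (hAPN : WeaklyAPN4 f)
    {v₁ v₂ : V4} (hv₁ : v₁ ≠ 0) (hv₂ : v₂ ≠ 0) (hv : v₁ ≠ v₂) (h₁ : DegLE (comp4 f v₁) 2) :
    ¬ DegLE (comp4 f v₂) 2 := by
  intro h₂
  have hv₁₂ : v₁ + v₂ ≠ 0 := fun h => hv (sub_eq_zero.1 (by rwa [CharTwo.sub_eq_add]))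
  obtain ⟨u, hu, hpolar⟩ := exists_ne_zero_polar_eq_zero_and_polar_eq_zero h₁ h₂
    (isBalanced_comp4 hf hv₁) (isBalanced_comp4 hf hv₂)
    (comp4_add f v₁ v₂ ▸ isBalanced_comp4 hf hv₁₂)
  have := hAPN u hu
  have := ncard_range_deriv4_le_four hv₁ hv₂ hv hpolar
  omega

theorem subsingleton_setOf_degLE_two_comp4 (hf : Function.Bijective f) (hAPN : WeaklyAPN4 f) :
    {v : V4 | v ≠ 0 ∧ DegLE (comp4 f v) 2}.Subsingleton := fun _ h₁ _ h₂ =>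
  by_contra fun hv => not_degLE_two_comp4_of_degLE_two hf hAPN h₁.1 h₂.1 hv h₁.2 h₂.2

theorem n3_eq_fifteen_sub (hf : Function.Bijective f) :
    n3 f = 15 - {v : V4 | v ≠ 0 ∧ DegLE (comp4 f v) 2}.ncard := by
  have hset : {v : V4 | v ≠ 0 ∧ DegEq (comp4 f v) 3} =
      {v : V4 | v ≠ 0} \ {v : V4 | v ≠ 0 ∧ DegLE (comp4 f v) 2} := by
    ext v
    simp only [Set.mem_ofPred_eq, Set.mem_sdiff, DegEq, Nat.add_one_sub_one,
      degLE_three_comp4 hf v, true_and]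
    tauto
  have hne : {v : V4 | v ≠ 0}.ncard = 15 := by
    rw [Set.ncard_eq_toFinset_card']
    decide
  rw [n3, hset, Set.ncard_sdiff fun v hv => hv.1, hne]

end Permutation

theorem deg_three_and_n3_refined_of_weaklyAPN_perm_general
    (f : V4 → V4) (hbij : Function.Bijective f)
    (hAPN : WeaklyAPN4 f) :
    (∀ v : V4, v ≠ 0 → DegLE (comp4 f v) 3) ∧
    (∃ v : V4, v ≠ 0 ∧ DegEq (comp4 f v) 3) ∧
    n3 f ∈ ({14, 15} : Set ℕ) := by
  have hquad := Set.ncard_le_one_iff_subsingleton.2 (subsingleton_setOf_degLE_two_comp4 hbij hAPN)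
  have hn3 : n3 f ∈ ({14, 15} : Set ℕ) := by
    rw [n3_eq_fifteen_sub hbij, Set.mem_insert_iff, Set.mem_singleton_iff]
    omega
  have hn3_ne : n3 f ≠ 0 := by
    rw [n3_eq_fifteen_sub hbij]
    omega
  obtain ⟨v, hv⟩ := Set.nonempty_of_ncard_ne_zero hn3_ne
  exact ⟨fun v _ => degLE_three_comp4 hbij v, ⟨v, hv⟩, hn3⟩

/-- Fact (refine-degree): a weakly APN permutation `f : (𝔽₂)⁴ → (𝔽₂)⁴` with `f 0 = 0`
has algebraic degree exactly 3, and `n₃(f) ∈ {14, 15}`. -/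
theorem deg_three_and_n3_refined_of_weaklyAPN_perm
    (f : V4 → V4) (hbij : Function.Bijective f) (hf0 : f 0 = 0)
    (hAPN : WeaklyAPN4 f) :
    (∀ v : V4, v ≠ 0 → DegLE (comp4 f v) 3) ∧
    (∃ v : V4, v ≠ 0 ∧ DegEq (comp4 f v) 3) ∧
    n3 f ∈ ({14, 15} : Set ℕ) :=
  deg_three_and_n3_refined_of_weaklyAPN_perm_general f hbij hAPN
end

section
/- Identify each integer k ∈ {0,…,15} with the vector of its binary digits in (𝔽₂)⁴. The permutation f of (𝔽₂)⁴ given by the value table (0,1,2,13,4,15,14,7,8,3,5,9,10,6,12,11) (i.e. f(0)=0, f(1)=1, f(2)=2, f(3)=13, …, f(15)=11) is weakly APN but is not 4-differentially uniform. -/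
/-! For every direction `u ≠ 0` the derivative of the table function takes at least five values,
but in direction `u = 3` it takes the value `1` six times, namely at `x = 5, 6, 8, 11, 12, 15`. -/

open Finset

abbrev table1 : V4 → V4 := tableFun [0,1,2,13,4,15,14,7,8,3,5,9,10,6,12,11]

theorem weaklyAPN4_iff (f : V4 → V4) :
    WeaklyAPN4 f ↔ ∀ u : V4, u ≠ 0 → 4 < #(univ.image (deriv4 f u)) := by
  simp only [WeaklyAPN4, Set.ncard_eq_toFinset_card', Set.toFinset_range]

theorem not_diffUnif4_of_lt_card {f : V4 → V4} {u v : V4} (hu : u ≠ 0)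
    (h : 4 < #{x | deriv4 f u x = v}) : ¬ DiffUnif4 f := by
  intro hf
  have := hf u hu v
  rw [Set.ncard_eq_toFinset_card', Set.toFinset_ofPred] at this
  omega

theorem table1_bijective : Function.Bijective table1 := by
  decide

theorem table1_weaklyAPN4 : WeaklyAPN4 table1 := by
  rw [weaklyAPN4_iff]
  decide

theorem filter_deriv4_table1_three_eq_one :
    ({x | deriv4 table1 (toVec 3) x = toVec 1} : Finset V4) =
      {toVec 5, toVec 6, toVec 8, toVec 11, toVec 12, toVec 15} := by
  decide

theorem table1_not_diffUnif4 : ¬ DiffUnif4 table1 :=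
  not_diffUnif4_of_lt_card (u := toVec 3) (v := toVec 1) (by decide) <| by
    rw [filter_deriv4_table1_three_eq_one]
    decide

/-- Fact: the permutation of `(𝔽₂)⁴` with value table
`(0,1,2,13,4,15,14,7,8,3,5,9,10,6,12,11)` is weakly APN but not 4-differentially uniform. -/
theorem table1_weaklyAPN_not_diffUnif :
    Function.Bijective (tableFun [0,1,2,13,4,15,14,7,8,3,5,9,10,6,12,11]) ∧
    WeaklyAPN4 (tableFun [0,1,2,13,4,15,14,7,8,3,5,9,10,6,12,11]) ∧
    ¬ DiffUnif4 (tableFun [0,1,2,13,4,15,14,7,8,3,5,9,10,6,12,11]) :=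
  ⟨table1_bijective, table1_weaklyAPN4, table1_not_diffUnif4⟩
end

section
/- Identify each integer k ∈ {0,…,15} with the vector of its binary digits in (𝔽₂)⁴. The permutation f of (𝔽₂)⁴ given by the value table (0,1,2,7,4,10,15,9,8,3,13,14,12,5,6,11) satisfies: for every nonzero u ∈ (𝔽₂)⁴ there is at most one nonzero v ∈ (𝔽₂)⁴ with x ↦ ⟨f̂_u(x), v⟩ constant (i.e. n̂(f) ≤ 1), yet f is not weakly APN. Hence the converse of 'weakly APN implies n̂(f) ≤ 1' fails. -/
/-! A value table that is a permutation of `0, …, 15` defines a permutation, since binary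
expansion `toNat4` and `toVec` are mutually inverse between `(𝔽₂)⁴` and `{0, …, 15}`.
For `⟨f̂_u, v⟩` to be constant, `v` must be orthogonal to every difference `f̂_u(x) + f̂_u(0)`;
for each `u ≠ 0` these differences span a subspace of dimension at least `3`, leaving at most
one nonzero `v`. On the other hand `f̂_8` takes only the four values `2, 8, 9, 15`. -/

theorem toNat4_lt (x : V4) : toNat4 x < 16 := by
  revert x; decide

theorem toVec_toNat4 (x : V4) : toVec (toNat4 x) = x := by
  revert x; decide

theorem toNat4_toVec {k : ℕ} (hk : k < 16) : toNat4 (toVec k) = k := by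
  revert k; decide

theorem tableFun_injective {L : List ℕ} (hL : L.Perm (List.range 16)) :
    Function.Injective (tableFun L) := by
  have hlen : L.length = 16 := by simpa using hL.length_eq
  have hlt : ∀ n, n < 16 → L.getD n 0 < 16 := fun n hn => by
    rw [List.getD_eq_getElem _ _ (hlen ▸ hn), ← List.mem_range, ← hL.mem_iff]
    exact List.getElem_mem _
  intro x y hxy
  have hentry : L.getD (toNat4 x) 0 = L.getD (toNat4 y) 0 := by
    simpa only [tableFun, toNat4_toVec (hlt _ (toNat4_lt _))] using congrArg toNat4 hxy
  rw [List.getD_eq_getElem _ _ (hlen ▸ toNat4_lt x), List.getD_eq_getElem _ _ (hlen ▸ toNat4_lt y),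
    hL.nodup_iff.mpr List.nodup_range |>.getElem_inj_iff] at hentry
  rw [← toVec_toNat4 x, ← toVec_toNat4 y, hentry]

theorem tableFun_bijective {L : List ℕ} (hL : L.Perm (List.range 16)) :
    Function.Bijective (tableFun L) :=
  Finite.injective_iff_bijective.mp (tableFun_injective hL)

/-- The nonzero `v` for which the component `⟨f̂_u, v⟩` is constant; `n̂(f)` is the maximum of
their number over `u ≠ 0`. -/
def constComponents (f : V4 → V4) (u : V4) : Finset V4 :=
  Finset.univ.filter fun v => v ≠ 0 ∧ ∃ c : ZMod 2, ∀ x : V4, dot4 (deriv4 f u x) v = c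

theorem coe_constComponents (f : V4 → V4) (u : V4) :
    (constComponents f u : Set V4) =
      {v : V4 | v ≠ 0 ∧ ∃ c : ZMod 2, ∀ x : V4, dot4 (deriv4 f u x) v = c} := by
  ext v; simp [constComponents]

theorem not_weaklyAPN4_of_deriv4_mem {f : V4 → V4} {u : V4} (hu : u ≠ 0) (S : Finset V4)
    (hS : S.card ≤ 4) (hmem : ∀ x, deriv4 f u x ∈ S) : ¬ WeaklyAPN4 f := fun h => by
  have hrange : Set.range (deriv4 f u) ⊆ S := Set.range_subset_iff.mpr hmem
  have := (Set.ncard_le_ncard hrange S.finite_toSet).trans_eq (Set.ncard_coe_finset S)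
  have := h u hu
  omega

/-- Fact: the permutation of `(𝔽₂)⁴` with value table
`(0,1,2,7,4,10,15,9,8,3,13,14,12,5,6,11)` satisfies `n̂(f) ≤ 1` (for every nonzero `u`
at most one nonzero `v` makes `x ↦ ⟨f̂_u(x), v⟩` constant), yet it is not weakly APN:
the converse of "weakly APN implies `n̂(f) ≤ 1`" fails. -/
theorem table2_nhat_le_one_not_weaklyAPN :
    Function.Bijective (tableFun [0,1,2,7,4,10,15,9,8,3,13,14,12,5,6,11]) ∧
    (∀ u : V4, u ≠ 0 →
      {v : V4 | v ≠ 0 ∧ ∃ c : ZMod 2, ∀ x : V4,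
        dot4 (deriv4 (tableFun [0,1,2,7,4,10,15,9,8,3,13,14,12,5,6,11]) u x) v = c}.Subsingleton) ∧
    ¬ WeaklyAPN4 (tableFun [0,1,2,7,4,10,15,9,8,3,13,14,12,5,6,11]) := by
  set f := tableFun [0,1,2,7,4,10,15,9,8,3,13,14,12,5,6,11]
  refine ⟨tableFun_bijective (by decide), fun u hu => ?_, ?_⟩
  · have hcard : ∀ u : V4, u ≠ 0 → (constComponents f u).card ≤ 1 := by decide
    rw [← coe_constComponents]
    exact Finset.card_le_one.mp (hcard u hu)
  · exact not_weaklyAPN4_of_deriv4_mem (u := toVec 8) (by decide)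
      {toVec 2, toVec 8, toVec 9, toVec 15} (Finset.card_le_four) (by decide)
end
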